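/- Let L be a 2-step nilpotent Lie algebra over a field k, minimally generated by m+1 elements. Then L has breadth type (0, m) if and only if L is isomorphic to ℒ_m/I for some proper central ideal I ⊊ Z(ℒ_m) of ℒ_m such that I contains no nonzero element of the form [a, b] with a, b ∈ ℒ_m. -/

import Mathlib

/- Common definitions: breadth, breadth type, derived subalgebra, Camina Lie algebras,
nilpotency class, minimal generation, and free nilpotent Lie algebras. -/

open Module

section Defs

variable (k : Type*) [Field k]

/-- The breadth of an element `x` of a Lie algebra: the rank of the adjoint map `ad x`
(equivalently, the codimension of the centralizer of `x`). -/
noncomputable def breadth (L : Type*) [LieRing L] [LieAlgebra k L] (x : L) : ℕ :=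
  Module.finrank k (LinearMap.range (LieAlgebra.ad k L x))

/-- A Lie algebra has breadth type `S` if `S` is exactly the set of breadths of its elements. -/
def HasBreadthType (L : Type*) [LieRing L] [LieAlgebra k L] (S : Set ℕ) : Prop :=
  Set.range (breadth k L) = S

/-- The derived subalgebra `L' = [L, L]` as a Lie ideal. -/
abbrev derivedIdeal (L : Type*) [LieRing L] [LieAlgebra k L] : LieIdeal k L :=
  ⁅(⊤ : LieIdeal k L), (⊤ : LieIdeal k L)⁆

lemma lie_mem_derivedIdeal (L : Type*) [LieRing L] [LieAlgebra k L] (x y : L) :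
    ⁅x, y⁆ ∈ derivedIdeal k L :=
  LieSubmodule.lie_mem_lie (LieSubmodule.mem_top x) (LieSubmodule.mem_top y)

/-- A Camina Lie algebra: `[x, L] = L'` for every `x ∈ L \ L'`. -/
def IsCamina (L : Type*) [LieRing L] [LieAlgebra k L] : Prop :=
  ∀ x : L, x ∉ derivedIdeal k L →
    LinearMap.range (LieAlgebra.ad k L x) = (derivedIdeal k L).toSubmodule

/-- A Lie algebra is nilpotent of class exactly `c`. -/
def IsNilpotentOfClass (L : Type*) [LieRing L] [LieAlgebra k L] (c : ℕ) : Prop :=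
  LieModule.lowerCentralSeries k L L c = ⊥ ∧ ∀ b < c, LieModule.lowerCentralSeries k L L b ≠ ⊥

/-- A Lie algebra is minimally generated by `n` elements: some `n` elements generate it
and no fewer elements generate it. -/
def MinimallyGenerated (L : Type*) [LieRing L] [LieAlgebra k L] (n : ℕ) : Prop :=
  (∃ s : Finset L, s.card = n ∧ LieSubalgebra.lieSpan k L ↑s = ⊤) ∧
  ∀ s : Finset L, LieSubalgebra.lieSpan k L ↑s = ⊤ → n ≤ s.card

/-- The free `c`-step nilpotent Lie algebra on `n` generators: the quotient of the free
Lie algebra on `n` generators by the `(c+1)`-st term `γ_{c+1}` of its lower central series. -/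
abbrev FreeNilp (c n : ℕ) :=
  FreeLieAlgebra k (Fin n) ⧸
    LieModule.lowerCentralSeries k (FreeLieAlgebra k (Fin n)) (FreeLieAlgebra k (Fin n)) c

/-- The canonical generators of the free `c`-step nilpotent Lie algebra on `n` generators. -/
noncomputable def gen (c n : ℕ) (i : Fin n) : FreeNilp k c n :=
  LieSubmodule.Quotient.mk
    (N := LieModule.lowerCentralSeries k (FreeLieAlgebra k (Fin n)) (FreeLieAlgebra k (Fin n)) c)
    (FreeLieAlgebra.of k i)

end Defs

/-!
Write `ℒ = FreeNilp k 2 (m + 1)` and `π : ℒ → kᵐ⁺¹` for its abelianization coordinates. The kernel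
of `π` is `ℒ'`, which is central, and computing brackets in `kⁿ ⊕ Λ²kⁿ` shows that for `π x ≠ 0`
the centralizer of `x` is `π⁻¹(k · π x)`. Hence `[x, ℒ]` has dimension `m`, and for a surjection
`φ : ℒ → L` the element `φ x` has breadth `m` exactly when `[x, ℒ] ∩ ker φ = 0`.

Conversely, since `L'` lies in the Frattini subalgebra of `L`, a minimal generating set is linearly
independent modulo `L'`, so `L ≅ ℒ ⧸ ker φ` with `ker φ ⊆ ℒ'`. If some `φ x` with `π x ≠ 0` were
central, the centre of `L` would strictly contain `L'`, and a dimension count would bound every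
breadth by `m - 1`. So all these `φ x` have breadth `m`, which is the condition on `ker φ`.
-/

section LieHom

variable {R L L' : Type*} [CommRing R] [LieRing L] [LieAlgebra R L] [LieRing L'] [LieAlgebra R L']

namespace LieIdeal

def mkQ (I : LieIdeal R L) : L →ₗ⁅R⁆ L ⧸ I :=
  { (I : Submodule R L).mkQ with map_lie' := rfl }

lemma mkQ_surjective (I : LieIdeal R L) : Function.Surjective I.mkQ :=
  Submodule.mkQ_surjective _

lemma ker_mkQ (I : LieIdeal R L) : I.mkQ.ker = I := by
  ext x
  exact LieSubmodule.Quotient.mk_eq_zero'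

def liftQ (I : LieIdeal R L) (f : L →ₗ⁅R⁆ L') (h : I ≤ f.ker) : L ⧸ I →ₗ⁅R⁆ L' :=
  { (I : Submodule R L).liftQ f.toLinearMap fun _ hx => f.mem_ker.1 (h hx) with
    map_lie' := by
      rintro ⟨x⟩ ⟨y⟩
      exact f.map_lie x y }

end LieIdeal

lemma lie_eq_zero_of_mem_center {x : L} (hx : x ∈ LieAlgebra.center R L) (y : L) : ⁅x, y⁆ = 0 := by
  rw [← lie_skew, (LieModule.mem_maxTrivSubmodule R L L x).1 hx y, neg_zero]

lemma LieHom.map_mem_center {f : L →ₗ⁅R⁆ L'} (hf : Function.Surjective f) {x : L}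
    (hx : x ∈ LieAlgebra.center R L) : f x ∈ LieAlgebra.center R L' := by
  rw [LieModule.mem_maxTrivSubmodule]
  intro y
  obtain ⟨y, rfl⟩ := hf y
  rw [← f.map_lie, (LieModule.mem_maxTrivSubmodule R L L x).1 hx y, map_zero]

lemma LieHom.lieSpan_image_eq_top {f : L →ₗ⁅R⁆ L'} (hf : Function.Surjective f) {s : Set L}
    (hs : LieSubalgebra.lieSpan R L s = ⊤) : LieSubalgebra.lieSpan R L' (f '' s) = ⊤ := by
  rw [← LieSubalgebra.map_lieSpan, hs, ← LieSubalgebra.map_top, f.range_eq_top.2 hf]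

noncomputable def LieHom.quotKerEquivOfSurjective (f : L →ₗ⁅R⁆ L') (hf : Function.Surjective f) :
    (L ⧸ f.ker) ≃ₗ⁅R⁆ L' :=
  f.quotKerEquivRange.trans
    ((LieEquiv.ofEq _ _ (by rw [f.range_eq_top.2 hf])).trans LieSubalgebra.topEquiv)

lemma FreeLieAlgebra.lieSpan_range_of (X : Type*) :
    LieSubalgebra.lieSpan R (FreeLieAlgebra R X) (Set.range (of R)) = ⊤ := by
  set K := LieSubalgebra.lieSpan R (FreeLieAlgebra R X) (Set.range (of R))
  let j := lift R fun x => (⟨of R x, LieSubalgebra.subset_lieSpan ⟨x, rfl⟩⟩ : K)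
  have hj : K.incl.comp j = LieHom.id := hom_ext fun x => by simp [j]
  exact eq_top_iff.2 fun x _ => (congr($hj x) : (j x : FreeLieAlgebra R X) = x) ▸ (j x).2

end LieHom

section TwoStep

variable {k L L' : Type*} [Field k] [LieRing L] [LieAlgebra k L] [LieRing L'] [LieAlgebra k L']

lemma lowerCentralSeries_two_eq_bot_iff :
    LieModule.lowerCentralSeries k L L 2 = ⊥ ↔ derivedIdeal k L ≤ LieAlgebra.center k L :=
  (LieModule.le_max_triv_iff_bracket_eq_bot k L L).symm

lemma map_mem_derivedIdeal (f : L →ₗ⁅k⁆ L') {x : L} (hx : x ∈ derivedIdeal k L) :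
    f x ∈ derivedIdeal k L' :=
  LieIdeal.map_lowerCentralSeries_le 1 (LieIdeal.mem_map hx)

lemma mem_derivedIdeal_of_map_mem {f : L →ₗ⁅k⁆ L'} (hf : Function.Surjective f)
    (hker : f.ker ≤ derivedIdeal k L) {x : L} (hx : f x ∈ derivedIdeal k L') :
    x ∈ derivedIdeal k L := by
  change f x ∈ LieModule.lowerCentralSeries k L' L' 1 at hx
  rw [← LieIdeal.lowerCentralSeries_map_eq 1 hf] at hx
  obtain ⟨⟨d, hd⟩, hfd⟩ := LieIdeal.mem_map_of_surjective hf hx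
  have hxd : x - d ∈ f.ker := by simp [hfd]
  simpa using add_mem (hker hxd) hd

lemma span_sup_derivedIdeal_eq_top {s : Set L} (hs : LieSubalgebra.lieSpan k L s = ⊤) :
    Submodule.span k s ⊔ (derivedIdeal k L).toSubmodule = ⊤ := by
  let K : LieSubalgebra k L :=
    { Submodule.span k s ⊔ (derivedIdeal k L).toSubmodule with
      lie_mem' := fun {x y} _ _ => Submodule.mem_sup_right (lie_mem_derivedIdeal k L x y) }
  have hK : LieSubalgebra.lieSpan k L s ≤ K :=
    LieSubalgebra.lieSpan_le.2 fun x hx => Submodule.mem_sup_left (Submodule.subset_span hx)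
  exact eq_top_iff.2 fun x _ => hK (hs ▸ LieSubalgebra.mem_top x)

/-- In a 2-step nilpotent Lie algebra the derived algebra lies in the Frattini subalgebra. -/
lemma lieSpan_eq_top_of_span_sup_derivedIdeal (hL : derivedIdeal k L ≤ LieAlgebra.center k L)
    {s : Set L} (hs : Submodule.span k s ⊔ (derivedIdeal k L).toSubmodule = ⊤) :
    LieSubalgebra.lieSpan k L s = ⊤ := by
  have hspan : Submodule.span k s ≤ (LieSubalgebra.lieSpan k L s).toSubmodule :=
    LieSubalgebra.submodule_span_le_lieSpan
  have hcentral : ∀ x ∈ (derivedIdeal k L).toSubmodule, ∀ y : L, ⁅x, y⁆ = 0 ∧ ⁅y, x⁆ = 0 :=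
    fun x hx y => ⟨lie_eq_zero_of_mem_center (hL hx) y,
      (LieModule.mem_maxTrivSubmodule k L L x).1 (hL hx) y⟩
  have hlie : ∀ x y : L, ⁅x, y⁆ ∈ LieSubalgebra.lieSpan k L s := by
    intro x y
    obtain ⟨a, ha, d, hd, rfl⟩ := Submodule.mem_sup.1 (hs ▸ Submodule.mem_top : x ∈ _)
    obtain ⟨b, hb, e, he, rfl⟩ := Submodule.mem_sup.1 (hs ▸ Submodule.mem_top : y ∈ _)
    simp only [add_lie, lie_add, (hcentral d hd _).1, (hcentral e he _).2, add_zero]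
    exact LieSubalgebra.lie_mem _ (hspan ha) (hspan hb)
  have hderived : (derivedIdeal k L).toSubmodule ≤ (LieSubalgebra.lieSpan k L s).toSubmodule := by
    rw [LieSubmodule.lieIdeal_oper_eq_linear_span', Submodule.span_le]
    rintro _ ⟨x, -, y, -, rfl⟩
    exact hlie x y
  rw [← LieSubalgebra.toSubmodule_inj, LieSubalgebra.top_toSubmodule, eq_top_iff, ← hs]
  exact sup_le hspan hderived

lemma finrank_le_card_add_finrank_derivedIdeal [FiniteDimensional k L] {ι : Type*} [Fintype ι]
    {g : ι → L} (hg : LieSubalgebra.lieSpan k L (Set.range g) = ⊤) :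
    finrank k L ≤ Fintype.card ι + finrank k (derivedIdeal k L).toSubmodule := by
  calc finrank k L
      = finrank k ↥(Submodule.span k (Set.range g) ⊔ (derivedIdeal k L).toSubmodule) := by
        rw [span_sup_derivedIdeal_eq_top hg, finrank_top]
    _ ≤ finrank k (Submodule.span k (Set.range g)) + finrank k (derivedIdeal k L).toSubmodule :=
        Submodule.finrank_add_le_finrank_add_finrank _ _
    _ ≤ _ := by gcongr; exact finrank_range_le_card g

lemma MinimallyGenerated.exists_linearIndependent {n : ℕ}
    (hL : derivedIdeal k L ≤ LieAlgebra.center k L) (h : MinimallyGenerated k L n) :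
    ∃ g : Fin n → L, LieSubalgebra.lieSpan k L (Set.range g) = ⊤ ∧
      LinearIndependent k ((derivedIdeal k L).toSubmodule.mkQ ∘ g) := by
  classical
  obtain ⟨⟨s, hs, hspan⟩, hmin⟩ := h
  let e := s.equivFinOfCardEq hs
  let g : Fin n → L := fun i => e.symm i
  have hg : Set.range g = s := by
    ext x
    refine ⟨fun ⟨i, hi⟩ => hi ▸ (e.symm i).2, fun hx => ⟨e ⟨x, hx⟩, by simp [g]⟩⟩
  refine ⟨g, hg ▸ hspan, linearIndependent_iff_notMem_span.2 fun j hj => ?_⟩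
  set t := (Finset.univ.erase j).image g
  have hj' : g j ∈ Submodule.span k t ⊔ (derivedIdeal k L).toSubmodule := by
    have ht : (t : Set L) = g '' (Set.univ \ {j}) := by simp [t, Finset.coe_erase]
    rw [ht, sup_comm, ← Submodule.comap_map_mkQ, Submodule.mem_comap, Submodule.map_span,
      ← Set.image_comp]
    exact hj
  have ht : Submodule.span k t ⊔ (derivedIdeal k L).toSubmodule = ⊤ := by
    rw [eq_top_iff, ← span_sup_derivedIdeal_eq_top hspan, ← hg]
    refine sup_le (Submodule.span_le.2 ?_) le_sup_right
    rintro _ ⟨i, rfl⟩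
    rcases eq_or_ne i j with rfl | hij
    · exact hj'
    · exact Submodule.mem_sup_left (Submodule.subset_span
        (Finset.mem_image.2 ⟨i, Finset.mem_erase.2 ⟨hij, Finset.mem_univ i⟩, rfl⟩))
  have hcard := hmin t (lieSpan_eq_top_of_span_sup_derivedIdeal hL ht)
  have : t.card ≤ n - 1 := Finset.card_image_le.trans (by simp)
  have : 0 < n := j.pos
  omega

end TwoStep

section Breadth

variable {k L : Type*} [Field k] [LieRing L] [LieAlgebra k L]

lemma breadth_eq_zero_of_mem_center {x : L} (hx : x ∈ LieAlgebra.center k L) :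
    breadth k L x = 0 := by
  rw [breadth, LinearMap.range_eq_bot.2 (LinearMap.ext (lie_eq_zero_of_mem_center hx)), finrank_bot]

lemma mem_center_of_breadth_eq_zero [FiniteDimensional k L] {x : L} (hx : breadth k L x = 0) :
    x ∈ LieAlgebra.center k L := by
  rw [breadth, Submodule.finrank_eq_zero, LinearMap.range_eq_bot] at hx
  rw [LieModule.mem_maxTrivSubmodule]
  intro y
  rw [← lie_skew, ← LieAlgebra.ad_apply k, hx, LinearMap.zero_apply, neg_zero]

lemma breadth_add_finrank_center_lt [FiniteDimensional k L] {x : L}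
    (hx : x ∉ LieAlgebra.center k L) :
    breadth k L x + finrank k (LieAlgebra.center k L).toSubmodule < finrank k L := by
  have hlt : (LieAlgebra.center k L).toSubmodule < LinearMap.ker (LieAlgebra.ad k L x) :=
    SetLike.lt_iff_le_and_exists.2
      ⟨fun z hz => (LieModule.mem_maxTrivSubmodule k L L z).1 hz x, x, lie_self x, hx⟩
  have := Submodule.finrank_lt_finrank_of_lt hlt
  have := (LieAlgebra.ad k L x).finrank_range_add_finrank_ker
  rw [breadth]
  omega

lemma breadth_add_two_le_card [FiniteDimensional k L] {ι : Type*} [Fintype ι] {g : ι → L}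
    (hg : LieSubalgebra.lieSpan k L (Set.range g) = ⊤)
    (hZ : derivedIdeal k L < LieAlgebra.center k L) {x : L} (hx : x ∉ LieAlgebra.center k L) :
    breadth k L x + 2 ≤ Fintype.card ι := by
  have := Submodule.finrank_lt_finrank_of_lt
    (show (derivedIdeal k L).toSubmodule < (LieAlgebra.center k L).toSubmodule from hZ)
  have := finrank_le_card_add_finrank_derivedIdeal hg
  have := breadth_add_finrank_center_lt hx
  omega

end Breadth

/-- `(ι → R) × (ι → ι → R)` with `⁅(u, _), (v, _)⁆ = (0, u ∧ v)`, where
`(u ∧ v) i j = u i * v j - v i * u j`: a 2-step nilpotent Lie algebra in which brackets of the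
free one can be computed. -/
def WedgeModel (R ι : Type*) : Type _ := (ι → R) × (ι → ι → R)

namespace WedgeModel

variable {R ι : Type*} [CommRing R]

instance : AddCommGroup (WedgeModel R ι) := inferInstanceAs (AddCommGroup ((ι → R) × (ι → ι → R)))

instance : Module R (WedgeModel R ι) := inferInstanceAs (Module R ((ι → R) × (ι → ι → R)))

instance : Bracket (WedgeModel R ι) (WedgeModel R ι) :=
  ⟨fun x y => ((0 : ι → R), fun i j => x.1 i * y.1 j - y.1 i * x.1 j)⟩

@[simp] lemma add_fst (x y : WedgeModel R ι) : (x + y).1 = x.1 + y.1 := rfl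
@[simp] lemma add_snd (x y : WedgeModel R ι) : (x + y).2 = x.2 + y.2 := rfl
@[simp] lemma smul_fst (t : R) (x : WedgeModel R ι) : (t • x).1 = t • x.1 := rfl
@[simp] lemma smul_snd (t : R) (x : WedgeModel R ι) : (t • x).2 = t • x.2 := rfl
@[simp] lemma zero_fst : (0 : WedgeModel R ι).1 = 0 := rfl
@[simp] lemma zero_snd : (0 : WedgeModel R ι).2 = 0 := rfl
@[simp] lemma lie_fst (x y : WedgeModel R ι) : ⁅x, y⁆.1 = 0 := rfl
@[simp] lemma lie_snd (x y : WedgeModel R ι) :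
    ⁅x, y⁆.2 = fun i j => x.1 i * y.1 j - y.1 i * x.1 j := rfl

instance : LieRing (WedgeModel R ι) where
  add_lie x y z := Prod.ext (by simp) (by ext; simp; ring)
  lie_add x y z := Prod.ext (by simp) (by ext; simp; ring)
  lie_self x := Prod.ext rfl (by ext; simp)
  leibniz_lie x y z := Prod.ext (by simp) (by ext; simp)

instance : LieAlgebra R (WedgeModel R ι) where
  lie_smul t x y := Prod.ext (by simp) (by ext; simp; ring)

def fst : WedgeModel R ι →ₗ[R] ι → R := LinearMap.fst R _ _

def single [DecidableEq ι] (i : ι) : WedgeModel R ι := (Pi.single i 1, 0)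

@[simp]
lemma fst_apply (x : WedgeModel R ι) : fst x = x.1 := rfl

@[simp]
lemma single_fst [DecidableEq ι] (i : ι) : (single i : WedgeModel R ι).1 = Pi.single i 1 := rfl

lemma lowerCentralSeries_two_eq_bot :
    LieModule.lowerCentralSeries R (WedgeModel R ι) (WedgeModel R ι) 2 = ⊥ := by
  rw [LieModule.lowerCentralSeries_succ, ← LieModule.le_max_triv_iff_bracket_eq_bot,
    LieModule.lowerCentralSeries_succ, LieSubmodule.lie_le_iff]
  intro x _ y _ z
  exact Prod.ext (by simp) (by ext; simp)

end WedgeModel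

namespace FreeNilp

variable {k : Type*} [Field k] {n : ℕ}

noncomputable def mk : FreeLieAlgebra k (Fin n) →ₗ⁅k⁆ FreeNilp k 2 n := LieIdeal.mkQ _

lemma mk_surjective : Function.Surjective (mk : FreeLieAlgebra k (Fin n) →ₗ⁅k⁆ FreeNilp k 2 n) :=
  LieIdeal.mkQ_surjective _

lemma lowerCentralSeries_two_eq_bot :
    LieModule.lowerCentralSeries k (FreeNilp k 2 n) (FreeNilp k 2 n) 2 = ⊥ := by
  rw [← LieIdeal.lowerCentralSeries_map_eq 2 (mk_surjective (k := k) (n := n)),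
    LieIdeal.map_eq_bot_iff, mk, LieIdeal.ker_mkQ]

lemma derivedIdeal_le_center :
    derivedIdeal k (FreeNilp k 2 n) ≤ LieAlgebra.center k (FreeNilp k 2 n) :=
  lowerCentralSeries_two_eq_bot_iff.1 lowerCentralSeries_two_eq_bot

lemma lieSpan_range_gen : LieSubalgebra.lieSpan k (FreeNilp k 2 n) (Set.range (gen k 2 n)) = ⊤ := by
  rw [show Set.range (gen k 2 n) = mk '' Set.range (FreeLieAlgebra.of k) from
    Set.range_comp mk (FreeLieAlgebra.of k)]
  exact LieHom.lieSpan_image_eq_top mk_surjective (FreeLieAlgebra.lieSpan_range_of _)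

section Lift

variable {B : Type*} [LieRing B] [LieAlgebra k B]

noncomputable def lift (hB : LieModule.lowerCentralSeries k B B 2 = ⊥) (g : Fin n → B) :
    FreeNilp k 2 n →ₗ⁅k⁆ B :=
  LieIdeal.liftQ _ (FreeLieAlgebra.lift k g) <| LieIdeal.map_eq_bot_iff.1 <|
    eq_bot_iff.2 (hB ▸ LieIdeal.map_lowerCentralSeries_le 2)

variable (hB : LieModule.lowerCentralSeries k B B 2 = ⊥) (g : Fin n → B)

@[simp]
lemma lift_gen (i : Fin n) : lift hB g (gen k 2 n i) = g i :=
  FreeLieAlgebra.lift_of_apply g i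

lemma lift_linearCombination (c : Fin n → k) :
    lift hB g (Fintype.linearCombination k (gen k 2 n) c) = Fintype.linearCombination k g c := by
  simp [Fintype.linearCombination_apply]

variable {g}

lemma lift_surjective (hg : LieSubalgebra.lieSpan k B (Set.range g) = ⊤) :
    Function.Surjective (lift hB g) := by
  rw [← LieHom.range_eq_top, eq_top_iff, ← hg, LieSubalgebra.lieSpan_le]
  rintro _ ⟨i, rfl⟩
  exact ⟨gen k 2 n i, lift_gen hB g i⟩

end Lift

noncomputable def toWedgeModel : FreeNilp k 2 n →ₗ⁅k⁆ WedgeModel k (Fin n) :=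
  lift WedgeModel.lowerCentralSeries_two_eq_bot WedgeModel.single

/-- The coordinates of the image in the abelianization `FreeNilp k 2 n ⧸ derivedIdeal ≅ kⁿ`. -/
noncomputable def coord : FreeNilp k 2 n →ₗ[k] Fin n → k :=
  WedgeModel.fst ∘ₗ toWedgeModel.toLinearMap

@[simp]
lemma coord_gen (i : Fin n) : coord (gen k 2 n i) = Pi.single i 1 := by
  simp [coord, toWedgeModel]

lemma toWedgeModel_lie (x y : FreeNilp k 2 n) :
    toWedgeModel ⁅x, y⁆ =
      ((0 : Fin n → k), fun i j => coord x i * coord y j - coord y i * coord x j) :=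
  toWedgeModel.map_lie x y

lemma coord_lie (x y : FreeNilp k 2 n) : coord ⁅x, y⁆ = 0 :=
  congr_arg Prod.fst (toWedgeModel_lie x y)

lemma coord_eq_zero_of_mem_derivedIdeal {x : FreeNilp k 2 n}
    (hx : x ∈ derivedIdeal k (FreeNilp k 2 n)) : coord x = 0 := by
  suffices (derivedIdeal k (FreeNilp k 2 n)).toSubmodule ≤ LinearMap.ker coord from this hx
  rw [LieSubmodule.lieIdeal_oper_eq_linear_span', Submodule.span_le]
  rintro _ ⟨x, -, y, -, rfl⟩
  exact coord_lie x y

@[simp]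
lemma coord_linearCombination (c : Fin n → k) :
    coord (Fintype.linearCombination k (gen k 2 n) c) = c := by
  ext j
  simp [Fintype.linearCombination_apply, Pi.single_apply]

lemma sub_linearCombination_coord_mem_derivedIdeal (x : FreeNilp k 2 n) :
    x - Fintype.linearCombination k (gen k 2 n) (coord x) ∈ derivedIdeal k (FreeNilp k 2 n) := by
  have hx : x ∈ Submodule.span k (Set.range (gen k 2 n)) ⊔ (derivedIdeal k _).toSubmodule :=
    span_sup_derivedIdeal_eq_top (lieSpan_range_gen (k := k)) ▸ Submodule.mem_top
  obtain ⟨a, ha, d, hd, rfl⟩ := Submodule.mem_sup.1 hx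
  rw [← Fintype.range_linearCombination] at ha
  obtain ⟨c, rfl⟩ := ha
  simpa [coord_eq_zero_of_mem_derivedIdeal hd] using hd

lemma mem_derivedIdeal_iff_coord_eq_zero {x : FreeNilp k 2 n} :
    x ∈ derivedIdeal k (FreeNilp k 2 n) ↔ coord x = 0 :=
  ⟨coord_eq_zero_of_mem_derivedIdeal, fun hx => by
    simpa [hx] using sub_linearCombination_coord_mem_derivedIdeal x⟩

lemma lie_linearCombination_coord (x y : FreeNilp k 2 n) :
    ⁅x, Fintype.linearCombination k (gen k 2 n) (coord y)⁆ = ⁅x, y⁆ := by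
  have hy := derivedIdeal_le_center (sub_linearCombination_coord_mem_derivedIdeal y)
  conv_rhs => rw [← add_sub_cancel (Fintype.linearCombination k (gen k 2 n) (coord y)) y]
  rw [lie_add x _ _, (LieModule.mem_maxTrivSubmodule _ _ _ _).1 hy x, add_zero]

lemma lie_eq_zero_iff {x y : FreeNilp k 2 n} (hx : coord x ≠ 0) :
    ⁅x, y⁆ = 0 ↔ coord y ∈ k ∙ coord x := by
  rw [Submodule.mem_span_singleton]
  constructor
  · intro h
    have hw := congr_arg Prod.snd (toWedgeModel_lie x y)
    rw [h, map_zero] at hw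
    obtain ⟨i, hi⟩ := Function.ne_iff.1 hx
    refine ⟨coord y i / coord x i, funext fun j => ?_⟩
    have hij := congr_fun (congr_fun hw i) j
    simp only [WedgeModel.zero_snd, Pi.zero_apply] at hij
    simp only [Pi.smul_apply, smul_eq_mul, Pi.zero_apply] at hi ⊢
    field_simp
    linear_combination hij
  · rintro ⟨t, ht⟩
    have hd : y - t • x ∈ derivedIdeal k (FreeNilp k 2 n) := by
      rw [mem_derivedIdeal_iff_coord_eq_zero, map_sub, map_smul, ht, sub_self]
    rw [← sub_add_cancel y (t • x), lie_add x _ _, lie_smul t x x, lie_self, smul_zero, add_zero]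
    exact (LieModule.mem_maxTrivSubmodule _ _ _ _).1 (derivedIdeal_le_center hd) x

variable {B : Type*} [LieRing B] [LieAlgebra k B]

lemma ker_lift_le_derivedIdeal (hB : LieModule.lowerCentralSeries k B B 2 = ⊥) {g : Fin n → B}
    (hg : LinearIndependent k ((derivedIdeal k B).toSubmodule.mkQ ∘ g)) :
    (lift hB g).ker ≤ derivedIdeal k (FreeNilp k 2 n) := by
  intro x hx
  rw [mem_derivedIdeal_iff_coord_eq_zero]
  have hd := map_mem_derivedIdeal (lift hB g) (sub_linearCombination_coord_mem_derivedIdeal x)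
  rw [map_sub, LieHom.mem_ker.1 hx, zero_sub, neg_mem_iff, lift_linearCombination,
    Fintype.linearCombination_apply] at hd
  have hsum := (Submodule.Quotient.mk_eq_zero (derivedIdeal k B).toSubmodule).2 hd
  rw [← Submodule.mkQ_apply, map_sum] at hsum
  simp only [map_smul] at hsum
  exact funext (Fintype.linearIndependent_iff.1 hg _ hsum)

lemma ker_ne_center {φ : FreeNilp k 2 n →ₗ⁅k⁆ B} (hφ : Function.Surjective φ)
    (hB : LieModule.lowerCentralSeries k B B 1 ≠ ⊥) : φ.ker ≠ LieAlgebra.center k _ := by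
  intro h
  apply hB
  rw [← LieIdeal.lowerCentralSeries_map_eq 1 hφ, LieIdeal.map_eq_bot_iff, h]
  exact derivedIdeal_le_center

end FreeNilp

section Quotient

open FreeNilp

variable {k B : Type*} [Field k] [LieRing B] [LieAlgebra k B] {m : ℕ}
  {φ : FreeNilp k 2 (m + 1) →ₗ⁅k⁆ B}

/-- `ad x` has rank `m` on `FreeNilp k 2 (m + 1)`, so `φ x` has breadth `m` iff `φ` is injective
on `⁅x, FreeNilp k 2 (m + 1)⁆`. -/
lemma breadth_map_eq_iff (hφ : Function.Surjective φ) {x : FreeNilp k 2 (m + 1)}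
    (hx : coord x ≠ 0) : breadth k B (φ x) = m ↔ ∀ y, φ ⁅x, y⁆ = 0 → ⁅x, y⁆ = 0 := by
  set ψ : (Fin (m + 1) → k) →ₗ[k] B :=
    φ.toLinearMap ∘ₗ LieAlgebra.ad k _ x ∘ₗ Fintype.linearCombination k (gen k 2 (m + 1))
  have hψ (c) : ψ c = φ ⁅x, Fintype.linearCombination k (gen k 2 (m + 1)) c⁆ := rfl
  have hψcoord (y) : ψ (coord y) = φ ⁅x, y⁆ := by rw [hψ, lie_linearCombination_coord]
  have hrange : LinearMap.range (LieAlgebra.ad k B (φ x)) = LinearMap.range ψ := by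
    apply le_antisymm
    · rintro _ ⟨z, rfl⟩
      obtain ⟨y, rfl⟩ := hφ z
      exact ⟨coord y, by rw [hψcoord, LieAlgebra.ad_apply, φ.map_lie]⟩
    · rintro _ ⟨c, rfl⟩
      exact ⟨φ (Fintype.linearCombination k (gen k 2 (m + 1)) c), by
        rw [hψ, LieAlgebra.ad_apply, φ.map_lie]⟩
  have hker : k ∙ coord x ≤ LinearMap.ker ψ := by
    rw [Submodule.span_singleton_le_iff_mem, LinearMap.mem_ker, hψcoord, lie_self, map_zero]
  have hrank : breadth k B (φ x) + finrank k (LinearMap.ker ψ) = m + 1 := by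
    rw [breadth, hrange, LinearMap.finrank_range_add_finrank_ker, Module.finrank_fin_fun]
  have hiff : breadth k B (φ x) = m ↔ finrank k (k ∙ coord x) = finrank k (LinearMap.ker ψ) := by
    rw [finrank_span_singleton hx]
    omega
  rw [hiff]
  constructor
  · intro h y hy
    rw [lie_eq_zero_iff hx, Submodule.eq_of_le_of_finrank_eq hker h, LinearMap.mem_ker, hψcoord]
    exact hy
  · intro h
    have hspan : k ∙ coord x = LinearMap.ker ψ :=
      le_antisymm hker fun c hc => by simpa using (lie_eq_zero_iff hx).1 (h _ hc)
    rw [hspan]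

lemma breadth_map_eq_zero (hφ : Function.Surjective φ) {x : FreeNilp k 2 (m + 1)}
    (hx : coord x = 0) : breadth k B (φ x) = 0 :=
  breadth_eq_zero_of_mem_center <| φ.map_mem_center hφ <|
    derivedIdeal_le_center (mem_derivedIdeal_iff_coord_eq_zero.2 hx)

theorem hasBreadthType_of_surjective (hφ : Function.Surjective φ)
    (hbr : ∀ a b : FreeNilp k 2 (m + 1), φ ⁅a, b⁆ = 0 → ⁅a, b⁆ = 0) :
    HasBreadthType k B {0, m} := by
  have hm (x : FreeNilp k 2 (m + 1)) (hx : coord x ≠ 0) : breadth k B (φ x) = m :=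
    (breadth_map_eq_iff hφ hx).2 (hbr x)
  ext r
  constructor
  · rintro ⟨z, rfl⟩
    obtain ⟨x, rfl⟩ := hφ z
    by_cases hx : coord x = 0
    · exact Or.inl (breadth_map_eq_zero hφ hx)
    · exact Or.inr (hm x hx)
  · rintro (rfl | rfl)
    · exact ⟨0, breadth_eq_zero_of_mem_center (zero_mem _)⟩
    · exact ⟨φ (gen k 2 (r + 1) 0), hm _ (by simp)⟩

lemma breadth_map_ne_zero [FiniteDimensional k B] (hφ : Function.Surjective φ)
    (hker : φ.ker ≤ derivedIdeal k _) (hm : 1 ≤ m) (hB : m ∈ Set.range (breadth k B))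
    {x : FreeNilp k 2 (m + 1)} (hx : coord x ≠ 0) : breadth k B (φ x) ≠ 0 := by
  intro h0
  obtain ⟨w, hw⟩ := hB
  have hBZ : derivedIdeal k B ≤ LieAlgebra.center k B := by
    rw [← lowerCentralSeries_two_eq_bot_iff, ← LieIdeal.lowerCentralSeries_map_eq 2 hφ,
      FreeNilp.lowerCentralSeries_two_eq_bot, LieIdeal.map_eq_bot_iff]
    exact bot_le
  have hφx : φ x ∉ derivedIdeal k B := fun h =>
    hx (mem_derivedIdeal_iff_coord_eq_zero.1 (mem_derivedIdeal_of_map_mem hφ hker h))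
  have hw' : w ∉ LieAlgebra.center k B := fun h => by
    rw [breadth_eq_zero_of_mem_center h] at hw
    omega
  have hspan : LieSubalgebra.lieSpan k B (Set.range (φ ∘ gen k 2 (m + 1))) = ⊤ := by
    rw [Set.range_comp]
    exact φ.lieSpan_image_eq_top hφ lieSpan_range_gen
  have := breadth_add_two_le_card hspan
    (SetLike.lt_iff_le_and_exists.2 ⟨hBZ, φ x, mem_center_of_breadth_eq_zero h0, hφx⟩) hw'
  simp only [Fintype.card_fin] at this
  omega

theorem lie_eq_zero_of_map_lie_eq_zero [FiniteDimensional k B] (hφ : Function.Surjective φ)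
    (hker : φ.ker ≤ derivedIdeal k _) (hm : 1 ≤ m) (hB : HasBreadthType k B {0, m})
    (a b : FreeNilp k 2 (m + 1)) (hab : φ ⁅a, b⁆ = 0) : ⁅a, b⁆ = 0 := by
  by_cases ha : coord a = 0
  · exact lie_eq_zero_of_mem_center
      (derivedIdeal_le_center (mem_derivedIdeal_iff_coord_eq_zero.2 ha)) b
  have hm' : m ∈ Set.range (breadth k B) := hB ▸ Or.inr rfl
  rcases (hB ▸ Set.mem_range_self (φ a) : breadth k B (φ a) ∈ ({0, m} : Set ℕ)) with h0 | hbm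
  · exact absurd h0 (breadth_map_ne_zero hφ hker hm hm' ha)
  · exact (breadth_map_eq_iff hφ ha).1 hbm b hab

end Quotient

/-- a 2-step nilpotent Lie algebra minimally generated by `m+1` elements has
breadth type `(0, m)` iff it is isomorphic to `ℒ_m/I` for some proper central ideal
`I ⊊ Z(ℒ_m)` containing no nonzero Lie bracket. -/
theorem breadth_type_zero_m_iff_quotient
    (k : Type*) [Field k] (L : Type*) [LieRing L] [LieAlgebra k L] [FiniteDimensional k L]
    (m : ℕ) (hm : 1 ≤ m)
    (h2 : IsNilpotentOfClass k L 2) (hmin : MinimallyGenerated k L (m+1)) :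
    HasBreadthType k L {0, m} ↔
      ∃ I : LieIdeal k (FreeNilp k 2 (m+1)),
        I < LieAlgebra.center k (FreeNilp k 2 (m+1)) ∧
        (∀ a b : FreeNilp k 2 (m+1), ⁅a, b⁆ ∈ I → ⁅a, b⁆ = 0) ∧
        Nonempty (L ≃ₗ⁅k⁆ (FreeNilp k 2 (m+1) ⧸ I)) := by
  constructor
  · intro hB
    obtain ⟨g, hg, hgind⟩ :=
      hmin.exists_linearIndependent (lowerCentralSeries_two_eq_bot_iff.1 h2.1)
    set φ := FreeNilp.lift h2.1 g
    have hφ : Function.Surjective φ := FreeNilp.lift_surjective h2.1 hg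
    have hker := FreeNilp.ker_lift_le_derivedIdeal h2.1 hgind
    refine ⟨φ.ker, ?_, fun a b hab => lie_eq_zero_of_map_lie_eq_zero hφ hker hm hB a b hab,
      ⟨(φ.quotKerEquivOfSurjective hφ).symm⟩⟩
    exact lt_of_le_of_ne (hker.trans FreeNilp.derivedIdeal_le_center)
      (FreeNilp.ker_ne_center hφ (h2.2 1 one_lt_two))
  · rintro ⟨I, -, hI, ⟨e⟩⟩
    refine hasBreadthType_of_surjective (φ := e.symm.toLieHom.comp I.mkQ)
      (e.symm.surjective.comp I.mkQ_surjective) fun a b hab => hI a b ?_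
    exact LieSubmodule.Quotient.mk_eq_zero'.1 ((map_eq_zero_iff e.symm e.symm.injective).1 hab)
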